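/- arXiv:1806.06683 — 4 statements merged into one kernel-verified Lean document; each statement's English description precedes it below -/
import Mathlib

section
/- Let {Y_n}_{n∈ℕ} be i.i.d. random variables with P(Y_n = 1) = P(Y_n = −1) = 1/2. Fix an integer x₀ ≥ 1 and define the integer-valued process X_0 = x₀ and X_{n+1} = X_n + Y_{n+1}·⌊√X_n⌋ if X_n ≥ 1, and X_{n+1} = X_n otherwise (⌊√·⌋ is the integer square root). Let T := min{n : X_n ≤ 0} (min ∅ := ∞). Then P(T < ∞) = 1 and P(T ≥ k) ∈ O(k^{−1/6}), i.e., there exist C > 0 and K ∈ ℕ with P(T ≥ k) ≤ C·k^{−1/6} for all k ≥ K. -/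
/-!
Stop the walk when it leaves `[1, a)`. The stopped walk `Z` is a martingale with values in
`[0, max x₀ (2a)]`, and `E[Z_k²] = x₀² + ∑_{m<k} E[s(Z_m)²]`, where the step `s(Z_m) = ⌊√Z_m⌋` is
at least `1` while `Z` is alive. Hence `Z` stays alive for `k` steps with probability at most
`max x₀ (2a)² / k`, and by Markov's inequality with `E[Z_k] = x₀` it exits through the top with
probability at most `x₀ / a`. If the loop still runs at time `k`, one of the two happened;
`a ≈ k^{1/3}` gives `P(T ≥ k) = O(k^{-1/3})`, and `k → ∞` gives almost-sure termination.
-/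

open MeasureTheory ProbabilityTheory Filter Topology

theorem Int.sqrt_le_self {z : ℤ} (hz : 0 ≤ z) : Int.sqrt z ≤ z := by
  have := Nat.sqrt_le_self z.toNat
  unfold Int.sqrt
  omega

theorem Int.one_le_sqrt {z : ℤ} (hz : 1 ≤ z) : 1 ≤ Int.sqrt z := by
  have : 1 ≤ Nat.sqrt z.toNat := Nat.le_sqrt.mpr (by omega)
  unfold Int.sqrt
  omega

theorem exists_pow_le_and_inv_le_rpow {d k : ℕ} (hd : d ≠ 0) (hk : 1 ≤ k) :
    ∃ a : ℕ, 1 ≤ a ∧ a ^ d ≤ k ∧ (a : ℝ)⁻¹ ≤ 2 * (k : ℝ) ^ (-(d : ℝ)⁻¹) := by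
  set r := (k : ℝ) ^ (d : ℝ)⁻¹
  have hr : 1 ≤ r := Real.one_le_rpow (by exact_mod_cast hk) (by positivity)
  have ha : 1 ≤ ⌊r⌋₊ := Nat.le_floor (by simpa using hr)
  refine ⟨⌊r⌋₊, ha, ?_, ?_⟩
  · have : (⌊r⌋₊ : ℝ) ^ d ≤ k :=
      (pow_le_pow_left₀ (Nat.cast_nonneg _) (Nat.floor_le (by positivity)) d).trans
        (Real.rpow_inv_natCast_pow (Nat.cast_nonneg _) hd).le
    exact_mod_cast this
  · have haR : (1 : ℝ) ≤ ⌊r⌋₊ := by exact_mod_cast ha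
    have hr2 : r / 2 ≤ ⌊r⌋₊ := by linarith [Nat.lt_floor_add_one r]
    rw [Real.rpow_neg (Nat.cast_nonneg _), ← div_eq_mul_inv, ← inv_div]
    exact inv_anti₀ (by positivity) hr2

section FairSign

variable {Ω : Type*} {m0 : MeasurableSpace Ω} {μ : Measure Ω} {R : Ω → ℤ}

def IsFairSign (μ : Measure Ω) (R : Ω → ℤ) : Prop :=
  μ {ω | R ω = 1} = 1 / 2 ∧ μ {ω | R ω = -1} = 1 / 2

theorem IsFairSign.ae_eq_one_or_neg_one [IsProbabilityMeasure μ] (hR : Measurable R)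
    (h : IsFairSign μ R) : ∀ᵐ ω ∂μ, R ω = 1 ∨ R ω = -1 := by
  have hdisj : Disjoint {ω | R ω = 1} {ω | R ω = -1} :=
    Set.disjoint_left.mpr fun ω h1 h2 => by simp_all
  have h1 : MeasurableSet {ω | R ω = 1} := hR (measurableSet_singleton 1)
  have h2 : MeasurableSet {ω | R ω = -1} := hR (measurableSet_singleton (-1))
  change ∀ᵐ ω ∂μ, ω ∈ {ω | R ω = 1} ∪ {ω | R ω = -1}
  rw [ae_mem_iff_measure_eq (h1.union h2).nullMeasurableSet, measure_union hdisj h2, h.1, h.2,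
    ENNReal.add_halves, measure_univ]

theorem IsFairSign.integral_eq_zero [IsProbabilityMeasure μ] (hR : Measurable R)
    (h : IsFairSign μ R) : ∫ ω, (R ω : ℝ) ∂μ = 0 := by
  have hsplit : (fun ω => (R ω : ℝ)) =ᵐ[μ]
      fun ω => {ω | R ω = 1}.indicator 1 ω - {ω | R ω = -1}.indicator 1 ω := by
    filter_upwards [h.ae_eq_one_or_neg_one hR] with ω hω
    rcases hω with hω | hω <;> simp [Set.indicator, hω]
  have h1 : MeasurableSet {ω | R ω = 1} := hR (measurableSet_singleton 1)
  have h2 : MeasurableSet {ω | R ω = -1} := hR (measurableSet_singleton (-1))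
  rw [integral_congr_ae hsplit, integral_sub ((integrable_const 1).indicator h1)
    ((integrable_const 1).indicator h2), integral_indicator_one h1, integral_indicator_one h2,
    measureReal_def, measureReal_def, h.1, h.2, sub_self]

theorem MeasureTheory.Integrable.mul_of_ae_sign {f : Ω → ℝ} (hf : Integrable f μ)
    (hR : Measurable R) (hsign : ∀ᵐ ω ∂μ, R ω = 1 ∨ R ω = -1) :
    Integrable (fun ω => f ω * R ω) μ := by
  refine hf.norm.mono' (hf.aestronglyMeasurable.mul
    ((measurable_of_countable (fun z : ℤ => (z : ℝ))).comp hR).aestronglyMeasurable) ?_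
  filter_upwards [hsign] with ω hω
  rcases hω with hω | hω <;> simp [hω]

end FairSign

section ScaledWalk

variable {Ω : Type*} (g : ℤ → ℤ) (Y : ℕ → Ω → ℤ) (x₀ : ℤ)

def scaledWalk : ℕ → Ω → ℤ
  | 0 => fun _ => x₀
  | n + 1 => fun ω => scaledWalk n ω + Y (n + 1) ω * g (scaledWalk n ω)

variable {g Y x₀}

@[simp]
theorem scaledWalk_zero (ω : Ω) : scaledWalk g Y x₀ 0 ω = x₀ := rfl

theorem scaledWalk_succ (n : ℕ) (ω : Ω) :
    scaledWalk g Y x₀ (n + 1) ω =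
      scaledWalk g Y x₀ n ω + Y (n + 1) ω * g (scaledWalk g Y x₀ n ω) := rfl

theorem eq_scaledWalk {X : ℕ → Ω → ℤ} (h0 : ∀ ω, X 0 ω = x₀)
    (hsucc : ∀ n ω, X (n + 1) ω = X n ω + Y (n + 1) ω * g (X n ω)) :
    X = scaledWalk g Y x₀ := by
  funext n ω
  induction n with
  | zero => exact h0 ω
  | succ n ih => rw [hsucc, ih, scaledWalk_succ]

theorem scaledWalk_indicator_eq_of_forall_mem {S : Set ℤ} {n : ℕ} {ω : Ω}
    (hS : ∀ m < n, scaledWalk (S.indicator g) Y x₀ m ω ∈ S) :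
    scaledWalk (S.indicator g) Y x₀ n ω = scaledWalk g Y x₀ n ω := by
  induction n with
  | zero => rfl
  | succ n ih =>
    have hn := hS n n.lt_succ_self
    rw [scaledWalk_succ, scaledWalk_succ, Set.indicator_of_mem hn,
      ih fun m hm => hS m (hm.trans n.lt_succ_self)]

theorem scaledWalk_indicator_of_notMem {S : Set ℤ} {n j : ℕ} {ω : Ω}
    (hS : scaledWalk (S.indicator g) Y x₀ n ω ∉ S) (hj : n ≤ j) :
    scaledWalk (S.indicator g) Y x₀ j ω = scaledWalk (S.indicator g) Y x₀ n ω := by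
  induction j, hj using Nat.le_induction with
  | base => rfl
  | succ j _ ih => rw [scaledWalk_succ, ih, Set.indicator_of_notMem hS, mul_zero, add_zero]

/-- A walk whose step is switched off outside `S` is the walk stopped on leaving `S`. -/
theorem exists_scaledWalk_indicator_exit {S : Set ℤ} {k : ℕ} {ω : Ω}
    (h : ¬ ∀ m < k, scaledWalk (S.indicator g) Y x₀ m ω ∈ S) :
    ∃ m < k, scaledWalk (S.indicator g) Y x₀ m ω ∉ S ∧
      scaledWalk (S.indicator g) Y x₀ m ω = scaledWalk g Y x₀ m ω ∧
      scaledWalk (S.indicator g) Y x₀ k ω = scaledWalk (S.indicator g) Y x₀ m ω := by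
  classical
  push Not at h
  obtain ⟨hk, hexit⟩ := Nat.find_spec h
  refine ⟨Nat.find h, hk, hexit, scaledWalk_indicator_eq_of_forall_mem fun j hj => ?_,
    scaledWalk_indicator_of_notMem hexit hk.le⟩
  by_contra hj'
  exact Nat.find_min h hj ⟨hj.trans hk, hj'⟩

variable {m0 : MeasurableSpace Ω}

theorem measurable_scaledWalk_past (n : ℕ) :
    Measurable[⨆ i ∈ Set.Iic n, MeasurableSpace.comap (Y i) inferInstance]
      (scaledWalk g Y x₀ n) := by
  induction n with
  | zero => exact measurable_const
  | succ n ih =>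
    have hY : Measurable[⨆ i ∈ Set.Iic (n + 1), MeasurableSpace.comap (Y i) inferInstance]
        (Y (n + 1)) :=
      Measurable.of_comap_le (le_iSup₂ (f := fun i (_ : i ∈ Set.Iic (n + 1)) =>
        MeasurableSpace.comap (Y i) inferInstance) (n + 1) (Set.mem_Iic.mpr le_rfl))
    have hpast := ih.mono (biSup_mono fun i (hi : i ≤ n) => hi.trans n.le_succ) le_rfl
    exact (measurable_of_countable fun p : ℤ × ℤ => p.1 + p.2 * g p.1).comp (hpast.prodMk hY)

theorem measurable_scaledWalk (hY : ∀ n, Measurable (Y n)) (n : ℕ) :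
    Measurable (scaledWalk g Y x₀ n) :=
  (measurable_scaledWalk_past n).mono (iSup₂_le fun i _ => (hY i).comap_le) le_rfl

theorem indepFun_scaledWalk {μ : Measure Ω} (hY : ∀ n, Measurable (Y n))
    (hind : iIndepFun Y μ) (n : ℕ) : IndepFun (scaledWalk g Y x₀ n) (Y (n + 1)) μ := by
  have hdisj : Disjoint (Set.Iic n) {n + 1} := by simp
  have h := indep_iSup_of_disjoint (fun i => (hY i).comap_le) hind hdisj
  rw [IndepFun_iff_Indep]
  refine indep_of_indep_of_le_right (indep_of_indep_of_le_left h
    (measurable_scaledWalk_past n).comap_le) ?_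
  exact le_iSup₂ (f := fun i (_ : i ∈ ({n + 1} : Set ℕ)) =>
    MeasurableSpace.comap (Y i) inferInstance) (n + 1) rfl

end ScaledWalk

section Moments

variable {Ω : Type*} {m0 : MeasurableSpace Ω} {μ : Measure Ω} {g : ℤ → ℤ} {Y : ℕ → Ω → ℤ}
  {x₀ : ℤ}

theorem exists_finset_ae_mem_scaledWalk (hsign : ∀ n, ∀ᵐ ω ∂μ, Y n ω = 1 ∨ Y n ω = -1)
    (n : ℕ) : ∃ s : Finset ℤ, ∀ᵐ ω ∂μ, scaledWalk g Y x₀ n ω ∈ s := by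
  induction n with
  | zero => exact ⟨{x₀}, by simp⟩
  | succ n ih =>
    obtain ⟨s, hs⟩ := ih
    refine ⟨s.image (fun z => z + g z) ∪ s.image (fun z => z - g z), ?_⟩
    filter_upwards [hs, hsign (n + 1)] with ω hω hY
    rw [scaledWalk_succ, Finset.mem_union, Finset.mem_image, Finset.mem_image]
    rcases hY with hY | hY
    · exact Or.inl ⟨_, hω, by rw [hY, one_mul]⟩
    · exact Or.inr ⟨_, hω, by rw [hY, neg_one_mul, sub_eq_add_neg]⟩

theorem integrable_comp_scaledWalk [IsFiniteMeasure μ] (hY : ∀ n, Measurable (Y n))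
    (hsign : ∀ n, ∀ᵐ ω ∂μ, Y n ω = 1 ∨ Y n ω = -1) (φ : ℤ → ℝ) (n : ℕ) :
    Integrable (fun ω => φ (scaledWalk g Y x₀ n ω)) μ := by
  obtain ⟨s, hs⟩ := exists_finset_ae_mem_scaledWalk (g := g) (x₀ := x₀) hsign n
  refine .of_bound ((measurable_of_countable φ).comp
    (measurable_scaledWalk hY n)).aestronglyMeasurable (∑ z ∈ s, ‖φ z‖) ?_
  filter_upwards [hs] with ω hω
  exact Finset.single_le_sum (f := fun z => ‖φ z‖) (fun _ _ => norm_nonneg _) hω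

variable [IsProbabilityMeasure μ]

theorem integral_comp_scaledWalk_succ (hY : ∀ n, Measurable (Y n)) (hind : iIndepFun Y μ)
    (hfair : ∀ n, IsFairSign μ (Y n)) (h : ℤ → ℝ) (n : ℕ) :
    ∫ ω, h (scaledWalk g Y x₀ (n + 1) ω) ∂μ =
      ∫ ω, (h (scaledWalk g Y x₀ n ω + g (scaledWalk g Y x₀ n ω)) +
        h (scaledWalk g Y x₀ n ω - g (scaledWalk g Y x₀ n ω))) / 2 ∂μ := by
  have hsign n := (hfair n).ae_eq_one_or_neg_one (hY n)
  set Z := scaledWalk g Y x₀ n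
  let A : ℤ → ℝ := fun z => (h (z + g z) + h (z - g z)) / 2
  let B : ℤ → ℝ := fun z => (h (z + g z) - h (z - g z)) / 2
  -- as `Y (n + 1) = ±1`, the new value `h (Z + Y (n + 1) * g Z)` is affine in `Y (n + 1)`
  have hsplit : (fun ω => h (scaledWalk g Y x₀ (n + 1) ω)) =ᵐ[μ]
      fun ω => A (Z ω) + B (Z ω) * Y (n + 1) ω := by
    filter_upwards [hsign (n + 1)] with ω hω
    rcases hω with hω | hω <;> simp [A, B, Z, scaledWalk_succ, hω, ← sub_eq_add_neg] <;> ring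
  have hcross : ∫ ω, B (Z ω) * Y (n + 1) ω ∂μ = 0 := by
    have hB := measurable_of_countable B
    have hcast := measurable_of_countable fun y : ℤ => (y : ℝ)
    refine (((indepFun_scaledWalk hY hind n).comp hB hcast).integral_fun_mul_eq_mul_integral
      (hB.comp (measurable_scaledWalk hY n)).aestronglyMeasurable
      (hcast.comp (hY (n + 1))).aestronglyMeasurable).trans ?_
    simp [(hfair (n + 1)).integral_eq_zero (hY (n + 1))]
  rw [integral_congr_ae hsplit, integral_add (integrable_comp_scaledWalk hY hsign A n)
    ((integrable_comp_scaledWalk hY hsign B n).mul_of_ae_sign (hY (n + 1)) (hsign (n + 1))),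
    hcross, add_zero]

theorem integral_scaledWalk (hY : ∀ n, Measurable (Y n)) (hind : iIndepFun Y μ)
    (hfair : ∀ n, IsFairSign μ (Y n)) (n : ℕ) :
    ∫ ω, (scaledWalk g Y x₀ n ω : ℝ) ∂μ = x₀ := by
  induction n with
  | zero => simp
  | succ n ih =>
    have hstep (z w : ℤ) : (((z + w : ℤ) : ℝ) + ((z - w : ℤ) : ℝ)) / 2 = z := by
      push_cast
      ring
    simp only [integral_comp_scaledWalk_succ hY hind hfair (fun z => (z : ℝ)) n, hstep, ih]

theorem integral_scaledWalk_sq (hY : ∀ n, Measurable (Y n)) (hind : iIndepFun Y μ)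
    (hfair : ∀ n, IsFairSign μ (Y n)) (n : ℕ) :
    ∫ ω, (scaledWalk g Y x₀ n ω : ℝ) ^ 2 ∂μ =
      x₀ ^ 2 + ∑ m ∈ Finset.range n, ∫ ω, (g (scaledWalk g Y x₀ m ω) : ℝ) ^ 2 ∂μ := by
  have hsign n := (hfair n).ae_eq_one_or_neg_one (hY n)
  induction n with
  | zero => simp
  | succ n ih =>
    have hstep (z w : ℤ) :
        (((z + w : ℤ) : ℝ) ^ 2 + ((z - w : ℤ) : ℝ) ^ 2) / 2 = (z : ℝ) ^ 2 + (w : ℝ) ^ 2 := by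
      push_cast
      ring
    simp only [integral_comp_scaledWalk_succ hY hind hfair (fun z => (z : ℝ) ^ 2) n, hstep]
    rw [integral_add (integrable_comp_scaledWalk hY hsign (fun z => (z : ℝ) ^ 2) n)
      (integrable_comp_scaledWalk hY hsign (fun z => (g z : ℝ) ^ 2) n), ih,
      Finset.sum_range_succ, add_assoc]

theorem mul_measureReal_forall_ne_zero_le (hY : ∀ n, Measurable (Y n)) (hind : iIndepFun Y μ)
    (hfair : ∀ n, IsFairSign μ (Y n)) (k : ℕ) :
    k * μ.real {ω | ∀ m < k, g (scaledWalk g Y x₀ m ω) ≠ 0} ≤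
      ∫ ω, (scaledWalk g Y x₀ k ω : ℝ) ^ 2 ∂μ - x₀ ^ 2 := by
  have hsign n := (hfair n).ae_eq_one_or_neg_one (hY n)
  have hterm (m : ℕ) (hm : m ∈ Finset.range k) :
      μ.real {ω | ∀ m < k, g (scaledWalk g Y x₀ m ω) ≠ 0} ≤
        ∫ ω, (g (scaledWalk g Y x₀ m ω) : ℝ) ^ 2 ∂μ := by
    have hmarkov := mul_meas_ge_le_integral_of_nonneg (ae_of_all _ fun ω => sq_nonneg _)
      (integrable_comp_scaledWalk (g := g) (x₀ := x₀) hY hsign (fun z => (g z : ℝ) ^ 2) m) 1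
    refine (measureReal_mono fun ω hω => ?_).trans (one_mul (μ.real _) ▸ hmarkov)
    have hne := hω m (Finset.mem_range.mp hm)
    change (1 : ℝ) ≤ (g (scaledWalk g Y x₀ m ω) : ℝ) ^ 2
    exact_mod_cast one_le_sq_iff_one_le_abs _ |>.mpr (Int.one_le_abs hne)
  rw [integral_scaledWalk_sq hY hind hfair, add_sub_cancel_left]
  simpa using Finset.card_nsmul_le_sum _ _ _ hterm

theorem mul_measureReal_le_scaledWalk_le (hY : ∀ n, Measurable (Y n)) (hind : iIndepFun Y μ)
    (hfair : ∀ n, IsFairSign μ (Y n)) {k : ℕ} (hnonneg : ∀ᵐ ω ∂μ, 0 ≤ scaledWalk g Y x₀ k ω)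
    (a : ℤ) : a * μ.real {ω | a ≤ scaledWalk g Y x₀ k ω} ≤ x₀ := by
  have hsign n := (hfair n).ae_eq_one_or_neg_one (hY n)
  have hmarkov := mul_meas_ge_le_integral_of_nonneg
    (hnonneg.mono fun ω hω => Int.cast_nonneg (R := ℝ) hω)
    (integrable_comp_scaledWalk hY hsign (fun z => (z : ℝ)) k) a
  rw [integral_scaledWalk hY hind hfair] at hmarkov
  simpa only [Int.cast_le] using hmarkov

end Moments

section SqrtWalk

variable {Ω : Type*} {m0 : MeasurableSpace Ω} {μ : Measure Ω} [IsProbabilityMeasure μ]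
  {Y : ℕ → Ω → ℤ} {x₀ a : ℤ}

theorem scaledWalk_sqrt_Ico_mem_Icc (hx₀ : 0 ≤ x₀) {ω : Ω}
    (hω : ∀ n, Y n ω = 1 ∨ Y n ω = -1) (n : ℕ) :
    scaledWalk ((Set.Ico 1 a).indicator Int.sqrt) Y x₀ n ω ∈ Set.Icc 0 (max x₀ (2 * a)) := by
  induction n with
  | zero => simp [hx₀]
  | succ n ih =>
    rw [scaledWalk_succ]
    set z := scaledWalk ((Set.Ico 1 a).indicator Int.sqrt) Y x₀ n ω
    by_cases hz : z ∈ Set.Ico 1 a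
    · have h1 := Int.one_le_sqrt hz.1
      have h2 := Int.sqrt_le_self (zero_le_one.trans hz.1)
      rw [Set.indicator_of_mem hz, Set.mem_Icc]
      rw [Set.mem_Ico] at hz
      rcases hω (n + 1) with hY | hY <;> rw [hY] <;> omega
    · rwa [Set.indicator_of_notMem hz, mul_zero, add_zero]

theorem setOf_forall_pos_subset_union (k : ℕ) :
    {ω | ∀ n < k, 0 < scaledWalk ((Set.Ici 1).indicator Int.sqrt) Y x₀ n ω} ⊆
      {ω | ∀ m < k, (Set.Ico 1 a).indicator Int.sqrt
          (scaledWalk ((Set.Ico 1 a).indicator Int.sqrt) Y x₀ m ω) ≠ 0} ∪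
        {ω | a ≤ scaledWalk ((Set.Ico 1 a).indicator Int.sqrt) Y x₀ k ω} := by
  have hcap : (Set.Ico 1 a).indicator Int.sqrt =
      (Set.Ico 1 a).indicator ((Set.Ici 1).indicator Int.sqrt) := by
    rw [Set.indicator_indicator, Set.inter_eq_left.mpr Set.Ico_subset_Ici_self]
  intro ω hpos
  by_cases hlive : ∀ m < k, scaledWalk ((Set.Ico 1 a).indicator Int.sqrt) Y x₀ m ω ∈ Set.Ico 1 a
  · refine Or.inl fun m hm => ?_
    have := Int.one_le_sqrt (hlive m hm).1
    rw [Set.indicator_of_mem (hlive m hm)]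
    omega
  · rw [hcap] at hlive ⊢
    obtain ⟨m, hm, hexit, heq, hstop⟩ := exists_scaledWalk_indicator_exit hlive
    have hposm := hpos m hm
    rw [← heq] at hposm
    rw [Set.mem_Ico] at hexit
    exact Or.inr (show a ≤ _ by omega)

theorem measureReal_forall_pos_le (hY : ∀ n, Measurable (Y n)) (hind : iIndepFun Y μ)
    (hfair : ∀ n, IsFairSign μ (Y n)) (hx₀ : 0 ≤ x₀) (ha : 0 < a) {k : ℕ} (hk : 0 < k) :
    μ.real {ω | ∀ n < k, 0 < scaledWalk ((Set.Ici 1).indicator Int.sqrt) Y x₀ n ω} ≤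
      ((max x₀ (2 * a) : ℤ) : ℝ) ^ 2 / k + x₀ / a := by
  have hsign n := (hfair n).ae_eq_one_or_neg_one (hY n)
  have hrange : ∀ᵐ ω ∂μ, ∀ n,
      scaledWalk ((Set.Ico 1 a).indicator Int.sqrt) Y x₀ n ω ∈ Set.Icc 0 (max x₀ (2 * a)) := by
    filter_upwards [ae_all_iff.mpr hsign] with ω hω
    exact scaledWalk_sqrt_Ico_mem_Icc hx₀ hω
  have hsecond : ∫ ω, (scaledWalk ((Set.Ico 1 a).indicator Int.sqrt) Y x₀ k ω : ℝ) ^ 2 ∂μ ≤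
      ((max x₀ (2 * a) : ℤ) : ℝ) ^ 2 := by
    refine (integral_mono_ae (integrable_comp_scaledWalk hY hsign (fun z => (z : ℝ) ^ 2) k)
      (integrable_const (((max x₀ (2 * a) : ℤ) : ℝ) ^ 2)) ?_).trans_eq (by simp)
    filter_upwards [hrange] with ω hω
    exact pow_le_pow_left₀ (by exact_mod_cast (hω k).1) (by exact_mod_cast (hω k).2) 2
  have hlive := (mul_measureReal_forall_ne_zero_le hY hind hfair k).trans
    (by linarith [sq_nonneg (x₀ : ℝ)] : _ ≤ ((max x₀ (2 * a) : ℤ) : ℝ) ^ 2)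
  have hexit := mul_measureReal_le_scaledWalk_le hY hind hfair (hrange.mono fun ω h => (h k).1) a
  calc _ ≤ _ := measureReal_mono (setOf_forall_pos_subset_union k)
    _ ≤ _ := measureReal_union_le _ _
    _ ≤ _ := add_le_add ((le_div_iff₀' (by positivity)).mpr hlive)
      ((le_div_iff₀' (by positivity)).mpr hexit)

theorem measureReal_forall_pos_le_div (hY : ∀ n, Measurable (Y n)) (hind : iIndepFun Y μ)
    (hfair : ∀ n, IsFairSign μ (Y n)) (hx₀ : 0 ≤ x₀) {a k : ℕ} (ha : 1 ≤ a) (hak : a ^ 3 ≤ k) :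
    μ.real {ω | ∀ n < k, 0 < scaledWalk ((Set.Ici 1).indicator Int.sqrt) Y x₀ n ω} ≤
      (((x₀ : ℝ) + 2) ^ 2 + x₀) / a := by
  have hk : 0 < k := (pow_pos ha 3).trans_le hak
  have haR : (1 : ℝ) ≤ a := by exact_mod_cast ha
  have hx₀R : (0 : ℝ) ≤ x₀ := by exact_mod_cast hx₀
  have hM : ((max x₀ (2 * a) : ℤ) : ℝ) ≤ (x₀ + 2) * a := by
    push_cast
    exact max_le (by nlinarith) (by nlinarith)
  have hsq : ((max x₀ (2 * a) : ℤ) : ℝ) ^ 2 / k ≤ ((x₀ : ℝ) + 2) ^ 2 / a :=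
    calc _ ≤ (((x₀ : ℝ) + 2) * a) ^ 2 / a ^ 3 :=
          div_le_div₀ (by positivity) (pow_le_pow_left₀ (by positivity) hM 2) (by positivity)
            (by exact_mod_cast hak)
      _ = ((x₀ : ℝ) + 2) ^ 2 / a := by field_simp
  refine (measureReal_forall_pos_le hY hind hfair hx₀ (a := a) (by exact_mod_cast ha) hk).trans ?_
  rw [add_div, Int.cast_natCast]
  exact add_le_add_left hsq _

end SqrtWalk

/-- **Almost-sure termination with `O(k^{−1/6})` tail for the loop
`while x ≥ 1 do x := x + r·⌊√x⌋ od` with fair `±1` sampling.**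
`T = min {n | X n ≤ 0}`; `P(T < ∞) = μ {ω | ∃ n, X n ω ≤ 0}` and
`P(T ≥ k) = μ {ω | ∀ n < k, 0 < X n ω}`. -/
theorem sqrt_increment_walk_termination
    {Ω : Type*} {m0 : MeasurableSpace Ω} (μ : Measure Ω) [IsProbabilityMeasure μ]
    (Y : ℕ → Ω → ℤ) (hmeas : ∀ n, Measurable (Y n))
    (hindep : iIndepFun Y μ)
    (hdist : ∀ n, μ {ω | Y n ω = 1} = 1 / 2 ∧ μ {ω | Y n ω = -1} = 1 / 2)
    (x₀ : ℤ) (hx₀ : 1 ≤ x₀)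
    (X : ℕ → Ω → ℤ) (hX0 : ∀ ω, X 0 ω = x₀)
    (hXrec : ∀ n ω, X (n + 1) ω =
      if 1 ≤ X n ω then X n ω + Y (n + 1) ω * Int.sqrt (X n ω) else X n ω) :
    μ {ω | ∃ n : ℕ, X n ω ≤ 0} = 1 ∧
      ∃ C > (0 : ℝ), ∃ K : ℕ, ∀ k : ℕ, K ≤ k →
        (μ {ω | ∀ n < k, 0 < X n ω}).toReal ≤ C * (k : ℝ) ^ (-(1 / 6) : ℝ) := by
  have hX : X = scaledWalk ((Set.Ici 1).indicator Int.sqrt) Y x₀ := by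
    refine eq_scaledWalk hX0 fun n ω => ?_
    rw [hXrec]
    split_ifs with h
    · rw [Set.indicator_of_mem (Set.mem_Ici.mpr h)]
    · rw [Set.indicator_of_notMem (mt Set.mem_Ici.mp h), mul_zero, add_zero]
  set D : ℝ := ((x₀ : ℝ) + 2) ^ 2 + x₀
  have hD : 0 < D := by
    have : (1 : ℝ) ≤ x₀ := by exact_mod_cast hx₀
    positivity
  have htail (k : ℕ) (hk : 1 ≤ k) : μ.real {ω | ∀ n < k, 0 < X n ω} ≤
      2 * D * (k : ℝ) ^ (-(1 / 6) : ℝ) := by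
    obtain ⟨a, ha, hak, hinv⟩ := exists_pow_le_and_inv_le_rpow three_ne_zero hk
    calc _ ≤ D / a := hX ▸ measureReal_forall_pos_le_div hmeas hindep hdist (by omega) ha hak
      _ ≤ D * (2 * (k : ℝ) ^ (-((3 : ℕ) : ℝ)⁻¹)) := by rw [div_eq_mul_inv]; gcongr
      _ ≤ 2 * D * (k : ℝ) ^ (-(1 / 6) : ℝ) := by
        rw [← mul_assoc, mul_comm D]
        gcongr
        · exact_mod_cast hk
        · norm_num
  refine ⟨?_, 2 * D, by positivity, 1, htail⟩
  have hlim : Tendsto (fun k : ℕ => 2 * D * (k : ℝ) ^ (-(1 / 6) : ℝ)) atTop (𝓝 0) := by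
    simpa using ((tendsto_rpow_neg_atTop (by norm_num : (0 : ℝ) < 1 / 6)).comp
      tendsto_natCast_atTop_atTop).const_mul (2 * D)
  have hnever : μ.real {ω | ∀ n, 0 < X n ω} = 0 := by
    refine le_antisymm (ge_of_tendsto hlim ?_) measureReal_nonneg
    filter_upwards [eventually_ge_atTop 1] with k hk
    refine (measureReal_mono fun ω hω n _ => ?_).trans (htail k hk)
    exact hω n
  have hmeasS : MeasurableSet {ω | ∀ n, 0 < X n ω} := by
    rw [Set.ofPred_forall]
    exact .iInter fun n => measurableSet_lt measurable_const (hX ▸ measurable_scaledWalk hmeas n)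
  rw [show {ω | ∃ n, X n ω ≤ 0} = {ω | ∀ n, 0 < X n ω}ᶜ by ext; simp,
    prob_compl_eq_one_iff hmeasS, ← measureReal_eq_zero_iff, hnever]
end

section
/- Let {R_n}_{n∈ℕ} be i.i.d. integer-valued random variables with bounded range (there is M ∈ ℕ with |R_n| ≤ M a.s.), nonpositive mean E(R_1) ≤ 0, and nonzero variance Var(R_1) > 0. Fix an integer x₀ and define X_0 = x₀ and X_{n+1} = X_n + R_{n+1} if X_n ≥ 1, and X_{n+1} = X_n otherwise. Let T := min{n : X_n ≤ 0} (min ∅ := ∞). Then P(T < ∞) = 1 and P(T ≥ k) ∈ O(1/√k), i.e., there exist C > 0 and K ∈ ℕ with P(T ≥ k) ≤ C/√k for all k ≥ K. -/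
/-!
While `X` is positive it equals `x₀` plus the random walk `S` of the increments, so it suffices
to bound the probability that `S` stays above `-a` for `k` steps.

If the mean `m` is negative, `S (k - 1)` concentrates around `(k - 1) m` and Chebyshev's
inequality gives `O(1/k)`.

If `m = 0`, stop `S` when it leaves `(-a, b)`. For the stopped walk `W`, the expectation of
`(W + a) (b - W)` drops by the variance `v` for every step spent inside the corridor, while
`(W + a) (b - W) ≥ -M (a + b + M)` because the overshoot is at most `M`; so the walk stays inside
for `k` steps with probability `≤ (a + M) (b + M) / (v k)`. Since `E W = 0` and `W ≥ -(a + M)`,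
it leaves through `b` with probability `≤ (a + M) / b`. Take `b = √k`.

Termination follows by letting `k → ∞`.
-/

open MeasureTheory ProbabilityTheory Finset

namespace BoundedStepWalk

variable {Ω : Type*} {m0 : MeasurableSpace Ω} {μ : Measure Ω} {Y : ℕ → Ω → ℝ}
  {a b M v : ℝ}

def walk (Y : ℕ → Ω → ℝ) (n : ℕ) (ω : Ω) : ℝ := ∑ i ∈ range n, Y i ω

abbrev pastSigma (Y : ℕ → Ω → ℝ) (n : ℕ) : MeasurableSpace Ω :=
  ⨆ i < n, MeasurableSpace.comap (Y i) inferInstance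

def staysIn (Y : ℕ → Ω → ℝ) (a b : ℝ) (n : ℕ) : Set Ω :=
  {ω | ∀ j < n, walk Y j ω ∈ Set.Ioo (-a) b}

/-- The walk stopped when it first leaves `(-a, b)`, written as a sum of increments `Y j` gated by
events that only depend on `Y 0, …, Y (j - 1)`. -/
noncomputable def stoppedWalk (Y : ℕ → Ω → ℝ) (a b : ℝ) (n : ℕ) (ω : Ω) : ℝ :=
  ∑ j ∈ range n, (staysIn Y a b (j + 1)).indicator (Y j) ω

lemma pastSigma_le (hY : ∀ i, Measurable (Y i)) (n : ℕ) : pastSigma Y n ≤ m0 :=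
  iSup₂_le fun i _ => (hY i).comap_le

lemma measurable_pastSigma {i n : ℕ} (hi : i < n) : Measurable[pastSigma Y n] (Y i) :=
  (comap_measurable (Y i)).mono (le_iSup₂ (f := fun j (_ : j < n) =>
    MeasurableSpace.comap (Y j) inferInstance) i hi) le_rfl

lemma measurable_pastSigma_walk {j n : ℕ} (hj : j ≤ n) :
    Measurable[pastSigma Y n] (walk Y j) :=
  Finset.measurable_fun_sum _ fun _ hi => measurable_pastSigma ((mem_range.1 hi).trans_le hj)

lemma measurableSet_pastSigma_staysIn {k n : ℕ} (hk : k ≤ n + 1) :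
    MeasurableSet[pastSigma Y n] (staysIn Y a b k) := by
  have : staysIn Y a b k = ⋂ j ∈ Set.Iio k, walk Y j ⁻¹' Set.Ioo (-a) b := by
    ext ω; simp [staysIn]
  rw [this]
  exact MeasurableSet.biInter (Set.to_countable _) fun j hj =>
    measurable_pastSigma_walk (by simp at hj; omega) measurableSet_Ioo

lemma measurable_pastSigma_stoppedWalk (n : ℕ) :
    Measurable[pastSigma Y n] (stoppedWalk Y a b n) :=
  Finset.measurable_fun_sum _ fun j hj => (measurable_pastSigma (mem_range.1 hj)).indicator
    (measurableSet_pastSigma_staysIn (by simp at hj; omega))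

lemma measurableSet_staysIn (hY : ∀ i, Measurable (Y i)) (k : ℕ) :
    MeasurableSet (staysIn Y a b k) :=
  pastSigma_le hY k _ (measurableSet_pastSigma_staysIn (by omega))

lemma indep_pastSigma (hY : ∀ i, Measurable (Y i)) (hindep : iIndepFun Y μ) (n : ℕ) :
    Indep (pastSigma Y n) (MeasurableSpace.comap (Y n) inferInstance) μ := by
  simpa [pastSigma] using indep_iSup_of_disjoint (fun i => (hY i).comap_le) hindep.iIndep
    (S := Set.Iio n) (T := {n}) (by simp)

lemma integral_mul_eq_of_measurable_pastSigma (hY : ∀ i, Measurable (Y i))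
    (hindep : iIndepFun Y μ) {n : ℕ} {g : Ω → ℝ} (hg : Measurable[pastSigma Y n] g)
    {ψ : ℝ → ℝ} (hψ : Measurable ψ) :
    ∫ ω, g ω * ψ (Y n ω) ∂μ = (∫ ω, g ω ∂μ) * ∫ ω, ψ (Y n ω) ∂μ := by
  have hgY : IndepFun g (fun ω => ψ (Y n ω)) μ := by
    rw [IndepFun_iff_Indep]
    exact indep_of_indep_of_le (indep_pastSigma hY hindep n) hg.comap_le
      (hψ.comp (comap_measurable (Y n))).comap_le
  exact hgY.integral_mul_eq_mul_integral
    (hg.mono (pastSigma_le hY n) le_rfl).aestronglyMeasurable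
    (hψ.comp (hY n)).aestronglyMeasurable

lemma integral_indicator_eq_of_measurableSet_pastSigma (hY : ∀ i, Measurable (Y i))
    (hindep : iIndepFun Y μ) {n : ℕ} {s : Set Ω} (hs : MeasurableSet[pastSigma Y n] s)
    {ψ : ℝ → ℝ} (hψ : Measurable ψ) :
    ∫ ω, s.indicator (fun ω => ψ (Y n ω)) ω ∂μ =
      μ.real s * ∫ ω, ψ (Y n ω) ∂μ := by
  have h1 : Measurable[pastSigma Y n] (s.indicator 1 : Ω → ℝ) := measurable_const.indicator hs
  rw [← integral_indicator_one (pastSigma_le hY n _ hs),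
    ← integral_mul_eq_of_measurable_pastSigma hY hindep h1 hψ]
  congr with ω
  by_cases h : ω ∈ s <;> simp [h]

lemma staysIn_anti {m n : ℕ} (h : m ≤ n) : staysIn Y a b n ⊆ staysIn Y a b m :=
  fun _ hω j hj => hω j (hj.trans_le h)

lemma stoppedWalk_succ (n : ℕ) (ω : Ω) : stoppedWalk Y a b (n + 1) ω =
    stoppedWalk Y a b n ω + (staysIn Y a b (n + 1)).indicator (Y n) ω :=
  sum_range_succ _ _

lemma stoppedWalk_eq_walk {n : ℕ} {ω : Ω} (h : ω ∈ staysIn Y a b n) :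
    stoppedWalk Y a b n ω = walk Y n ω :=
  sum_congr rfl fun _ hj => Set.indicator_of_mem (staysIn_anti (mem_range.1 hj) h) _

lemma stoppedWalk_eq_of_notMem {m n : ℕ} {ω : Ω} (h : ω ∉ staysIn Y a b (m + 1))
    (hmn : m ≤ n) : stoppedWalk Y a b n ω = stoppedWalk Y a b m ω := by
  induction n, hmn using Nat.le_induction with
  | base => rfl
  | succ n hmn ih =>
    rw [stoppedWalk_succ, ih, Set.indicator_of_notMem
      (fun h' => h (staysIn_anti (by omega) h')), add_zero]

lemma stoppedWalk_mem_Icc {ω : Ω} (hω : ∀ i, |Y i ω| ≤ M) (ha : 0 ≤ a) (hb : 0 ≤ b)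
    (n : ℕ) : stoppedWalk Y a b n ω ∈ Set.Icc (-(a + M)) (b + M) := by
  have hM0 : 0 ≤ M := (abs_nonneg _).trans (hω 0)
  induction n with
  | zero =>
    simp only [stoppedWalk, range_zero, sum_empty, Set.mem_Icc]
    constructor <;> linarith
  | succ n ih =>
    rw [stoppedWalk_succ]
    by_cases h : ω ∈ staysIn Y a b (n + 1)
    · have hwalk := h n n.lt_succ_self
      have hstep := abs_le.1 (hω n)
      rw [Set.indicator_of_mem h, stoppedWalk_eq_walk (staysIn_anti n.le_succ h)]
      constructor <;> linarith [hwalk.1, hwalk.2]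
    · rwa [Set.indicator_of_notMem h, add_zero]

lemma survival_subset_staysIn_union (k : ℕ) :
    {ω | ∀ n < k, -a < walk Y n ω} ⊆
      staysIn Y a b k ∪ {ω | b ≤ stoppedWalk Y a b k ω} := by
  classical
  intro ω hω
  by_cases hin : ω ∈ staysIn Y a b k
  · exact Or.inl hin
  right
  obtain ⟨j, hjk, hj⟩ : ∃ j < k, walk Y j ω ∉ Set.Ioo (-a) b := by
    simpa [staysIn] using hin
  have hex : ∃ j, walk Y j ω ∉ Set.Ioo (-a) b := ⟨j, hj⟩
  set j₀ := Nat.find hex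
  have hj₀k : j₀ < k := (Nat.find_min' hex hj).trans_lt hjk
  have hmem : ω ∈ staysIn Y a b j₀ := fun i hi => not_not.1 (Nat.find_min hex hi)
  have hexit : ω ∉ staysIn Y a b (j₀ + 1) := fun h =>
    Nat.find_spec hex (h j₀ j₀.lt_succ_self)
  have hb : b ≤ walk Y j₀ ω := by
    by_contra! hlt
    exact Nat.find_spec hex ⟨hω j₀ hj₀k, hlt⟩
  show b ≤ stoppedWalk Y a b k ω
  rwa [stoppedWalk_eq_of_notMem hexit hj₀k.le, stoppedWalk_eq_walk hmem]

lemma memLp_two_of_ae_abs_le [IsFiniteMeasure μ] (hY : ∀ i, Measurable (Y i))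
    (hM : ∀ᵐ ω ∂μ, ∀ i, |Y i ω| ≤ M) (i : ℕ) : MemLp (Y i) 2 μ :=
  MemLp.of_bound (hY i).aestronglyMeasurable M <| by
    filter_upwards [hM] with ω hω using (Real.norm_eq_abs _).trans_le (hω i)

lemma memLp_stoppedWalk (hY : ∀ i, Measurable (Y i)) (hY2 : ∀ i, MemLp (Y i) 2 μ) (n : ℕ) :
    MemLp (stoppedWalk Y a b n) 2 μ :=
  memLp_finsetSum _ fun j _ => (hY2 j).indicator (measurableSet_staysIn hY _)

lemma integral_stoppedWalk [IsFiniteMeasure μ] (hY : ∀ i, Measurable (Y i))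
    (hindep : iIndepFun Y μ) (hY2 : ∀ i, MemLp (Y i) 2 μ)
    (hmean : ∀ i, ∫ ω, Y i ω ∂μ = 0) (n : ℕ) :
    ∫ ω, stoppedWalk Y a b n ω ∂μ = 0 := by
  unfold stoppedWalk
  rw [integral_finsetSum _ fun j _ =>
    ((hY2 j).integrable one_le_two).indicator (measurableSet_staysIn hY _)]
  refine sum_eq_zero fun j _ => ?_
  simpa [hmean] using integral_indicator_eq_of_measurableSet_pastSigma hY hindep
    (measurableSet_pastSigma_staysIn (a := a) (b := b) (le_refl (j + 1))) measurable_id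

lemma stoppedWalk_succ_quadratic (n : ℕ) (ω : Ω) :
    (stoppedWalk Y a b (n + 1) ω + a) * (b - stoppedWalk Y a b (n + 1) ω) =
      (stoppedWalk Y a b n ω + a) * (b - stoppedWalk Y a b n ω)
        + (staysIn Y a b (n + 1)).indicator (fun ω => b - a - 2 * stoppedWalk Y a b n ω) ω
          * Y n ω
        - (staysIn Y a b (n + 1)).indicator (fun ω => Y n ω ^ 2) ω := by
  rw [stoppedWalk_succ]
  by_cases h : ω ∈ staysIn Y a b (n + 1)
  · simp only [Set.indicator_of_mem h]
    ring
  · simp only [Set.indicator_of_notMem h]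
    ring

lemma integral_stoppedWalk_quadratic [IsProbabilityMeasure μ] (hY : ∀ i, Measurable (Y i))
    (hindep : iIndepFun Y μ) (hY2 : ∀ i, MemLp (Y i) 2 μ)
    (hmean : ∀ i, ∫ ω, Y i ω ∂μ = 0) (hsq : ∀ i, ∫ ω, Y i ω ^ 2 ∂μ = v)
    (n : ℕ) :
    ∫ ω, (stoppedWalk Y a b n ω + a) * (b - stoppedWalk Y a b n ω) ∂μ =
      a * b - v * ∑ j ∈ range n, μ.real (staysIn Y a b (j + 1)) := by
  induction n with
  | zero => simp [stoppedWalk]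
  | succ n ih =>
    have hS : MeasurableSet[pastSigma Y n] (staysIn Y a b (n + 1)) :=
      measurableSet_pastSigma_staysIn le_rfl
    have hS' := pastSigma_le hY n _ hS
    have hW : MemLp (stoppedWalk Y a b n) 2 μ := memLp_stoppedWalk hY hY2 n
    have hg : MemLp (fun ω => b - a - 2 * stoppedWalk Y a b n ω) 2 μ :=
      (memLp_const (b - a)).sub (hW.const_mul 2)
    have hdrift : ∫ ω, (staysIn Y a b (n + 1)).indicator
        (fun ω => b - a - 2 * stoppedWalk Y a b n ω) ω * Y n ω ∂μ = 0 := by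
      simpa [hmean] using integral_mul_eq_of_measurable_pastSigma hY hindep
        ((((measurable_pastSigma_stoppedWalk n).const_mul 2).const_sub (b - a)).indicator hS)
        measurable_id
    have hsquare : ∫ ω, (staysIn Y a b (n + 1)).indicator (fun ω => Y n ω ^ 2) ω ∂μ =
        μ.real (staysIn Y a b (n + 1)) * v := by
      rw [integral_indicator_eq_of_measurableSet_pastSigma hY hindep hS
        (ψ := fun x => x ^ 2) (measurable_id.pow_const 2), hsq]
    have hquad : Integrable
        (fun ω => (stoppedWalk Y a b n ω + a) * (b - stoppedWalk Y a b n ω)) μ :=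
      (hW.add (memLp_const a)).integrable_mul ((memLp_const b).sub hW)
    have hcross : Integrable (fun ω => (staysIn Y a b (n + 1)).indicator
        (fun ω => b - a - 2 * stoppedWalk Y a b n ω) ω * Y n ω) μ :=
      (hg.indicator hS').integrable_mul (hY2 n)
    simp_rw [stoppedWalk_succ_quadratic]
    rw [integral_sub (hquad.fun_add hcross) ((hY2 n).integrable_sq.indicator hS'),
      integral_add hquad hcross, ih, hdrift, hsquare, sum_range_succ]
    ring

lemma measureReal_staysIn_le [IsProbabilityMeasure μ] (hY : ∀ i, Measurable (Y i))
    (hindep : iIndepFun Y μ) (hM : ∀ᵐ ω ∂μ, ∀ i, |Y i ω| ≤ M)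
    (hmean : ∀ i, ∫ ω, Y i ω ∂μ = 0) (hvar : ∀ i, variance (Y i) μ = v) (hv : 0 < v)
    (ha : 0 ≤ a) (hb : 0 ≤ b) {k : ℕ} (hk : 0 < k) :
    μ.real (staysIn Y a b k) ≤ (a + M) * (b + M) / (v * k) := by
  have hY2 := memLp_two_of_ae_abs_le hY hM
  have hW : MemLp (stoppedWalk Y a b k) 2 μ := memLp_stoppedWalk hY hY2 k
  have hlow : -(M * (a + b + M)) ≤
      ∫ ω, (stoppedWalk Y a b k ω + a) * (b - stoppedWalk Y a b k ω) ∂μ := by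
    calc -(M * (a + b + M)) = ∫ _, -(M * (a + b + M)) ∂μ := by simp
      _ ≤ ∫ ω, (stoppedWalk Y a b k ω + a) * (b - stoppedWalk Y a b k ω) ∂μ :=
        integral_mono_ae (integrable_const _)
          ((hW.add (memLp_const a)).integrable_mul ((memLp_const b).sub hW)) <| by
            filter_upwards [hM] with ω hω
            obtain ⟨h₁, h₂⟩ := stoppedWalk_mem_Icc hω ha hb k
            nlinarith
  have hsq : ∀ i, ∫ ω, Y i ω ^ 2 ∂μ = v := fun i =>
    (variance_of_integral_eq_zero (hY i).aemeasurable (hmean i)).symm.trans (hvar i)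
  rw [integral_stoppedWalk_quadratic hY hindep hY2 hmean hsq] at hlow
  have hsum :
      k * μ.real (staysIn Y a b k) ≤ ∑ j ∈ range k, μ.real (staysIn Y a b (j + 1)) := by
    simpa using card_nsmul_le_sum (range k) _ _ fun j hj =>
      measureReal_mono (μ := μ) (staysIn_anti (a := a) (b := b) (Y := Y) (mem_range.1 hj))
  rw [le_div_iff₀ (by positivity)]
  nlinarith

lemma measureReal_exit_le [IsProbabilityMeasure μ] (hY : ∀ i, Measurable (Y i))
    (hindep : iIndepFun Y μ) (hM : ∀ᵐ ω ∂μ, ∀ i, |Y i ω| ≤ M)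
    (hmean : ∀ i, ∫ ω, Y i ω ∂μ = 0) (ha : 0 ≤ a) (hb : 0 < b) (k : ℕ) :
    μ.real {ω | b ≤ stoppedWalk Y a b k ω} ≤ (a + M) / b := by
  have hY2 := memLp_two_of_ae_abs_le hY hM
  have hW : Integrable (stoppedWalk Y a b k) μ :=
    (memLp_stoppedWalk hY hY2 k).integrable one_le_two
  have hE : MeasurableSet {ω | b ≤ stoppedWalk Y a b k ω} :=
    measurableSet_le measurable_const
      ((measurable_pastSigma_stoppedWalk k).mono (pastSigma_le hY k) le_rfl)
  rw [le_div_iff₀ hb]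
  calc μ.real {ω | b ≤ stoppedWalk Y a b k ω} * b
      = ∫ ω, {ω | b ≤ stoppedWalk Y a b k ω}.indicator (fun _ => b) ω ∂μ := by
        rw [integral_indicator_const _ hE, smul_eq_mul]
    _ ≤ ∫ ω, (stoppedWalk Y a b k ω + (a + M)) ∂μ := by
      refine integral_mono_ae ((integrable_const b).indicator hE)
        (hW.add (integrable_const _)) ?_
      filter_upwards [hM] with ω hω
      have hlow := (stoppedWalk_mem_Icc hω ha hb.le k).1
      have hM0 : 0 ≤ M := (abs_nonneg _).trans (hω 0)
      by_cases h : b ≤ stoppedWalk Y a b k ω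
      · rw [Set.indicator_of_mem (by exact h)]
        linarith
      · rw [Set.indicator_of_notMem (by exact h)]
        linarith
    _ = a + M := by
      rw [integral_add hW (integrable_const _), integral_stoppedWalk hY hindep hY2 hmean]
      simp

lemma measureReal_survival_le [IsProbabilityMeasure μ] (hY : ∀ i, Measurable (Y i))
    (hindep : iIndepFun Y μ) (hM : ∀ᵐ ω ∂μ, ∀ i, |Y i ω| ≤ M)
    (hmean : ∀ i, ∫ ω, Y i ω ∂μ = 0) (hvar : ∀ i, variance (Y i) μ = v) (hv : 0 < v)
    (ha : 0 ≤ a) (hb : 0 < b) {k : ℕ} (hk : 0 < k) :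
    μ.real {ω | ∀ n < k, -a < walk Y n ω} ≤ (a + M) * (b + M) / (v * k) + (a + M) / b :=
  (measureReal_mono (survival_subset_staysIn_union k)).trans <|
    (measureReal_union_le _ _).trans <|
      add_le_add (measureReal_staysIn_le hY hindep hM hmean hvar hv ha hb.le hk)
        (measureReal_exit_le hY hindep hM hmean ha hb k)

lemma survival_le_div_sqrt_of_integral_eq_zero [IsProbabilityMeasure μ]
    (hY : ∀ i, Measurable (Y i)) (hindep : iIndepFun Y μ)
    (hM : ∀ᵐ ω ∂μ, ∀ i, |Y i ω| ≤ M) (hmean : ∀ i, ∫ ω, Y i ω ∂μ = 0)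
    (hvar : ∀ i, variance (Y i) μ = v) (hv : 0 < v) (a : ℝ) :
    ∃ C > 0, ∃ K : ℕ, ∀ k ≥ K,
      μ.real {ω | ∀ n < k, -a < walk Y n ω} ≤ C / √k := by
  obtain ⟨ω, hω⟩ := hM.exists
  have hM0 : 0 ≤ M := (abs_nonneg _).trans (hω 0)
  set a' := max a 1
  have ha' : 1 ≤ a' := le_max_right a 1
  refine ⟨(a' + M) * ((1 + M) / v + 1), by positivity, 1, fun k hk => ?_⟩
  have hk' : (1 : ℝ) ≤ k := by exact_mod_cast hk
  set s := √(k : ℝ)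
  have hs : 1 ≤ s := Real.one_le_sqrt.2 hk'
  have hss : s * s = k := Real.mul_self_sqrt (by positivity)
  have hmono : {ω | ∀ n < k, -a < walk Y n ω} ⊆ {ω | ∀ n < k, -a' < walk Y n ω} :=
    fun ω hω n hn => (neg_le_neg (le_max_left a 1)).trans_lt (hω n hn)
  refine (measureReal_mono hmono).trans ((measureReal_survival_le hY hindep hM hmean hvar hv
    (by positivity) (by positivity : 0 < s) (by omega)).trans ?_)
  have hfirst : (a' + M) * (s + M) / (v * k) ≤ (a' + M) * (1 + M) / (v * s) := by
    rw [div_le_div_iff₀ (by positivity) (by positivity), ← hss]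
    nlinarith [mul_nonneg (mul_nonneg (mul_nonneg (by positivity : 0 ≤ a' + M) hv.le)
      (by positivity : 0 ≤ s)) (mul_nonneg hM0 (sub_nonneg.2 hs))]
  calc (a' + M) * (s + M) / (v * k) + (a' + M) / s
      ≤ (a' + M) * (1 + M) / (v * s) + (a' + M) / s := add_le_add_left hfirst _
    _ = (a' + M) * ((1 + M) / v + 1) / s := by field_simp

lemma measureReal_lt_walk_le [IsFiniteMeasure μ] (hindep : iIndepFun Y μ)
    (hY2 : ∀ i, MemLp (Y i) 2 μ) {m : ℝ} (hmean : ∀ i, ∫ ω, Y i ω ∂μ = m) (hm : m < 0)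
    (hvar : ∀ i, variance (Y i) μ = v) {n : ℕ} (hn : 0 < n) (hna : 2 * a ≤ n * -m) :
    μ.real {ω | -a < walk Y n ω} ≤ 4 * v / (n * m ^ 2) := by
  set F := ∑ i ∈ range n, Y i
  have hF : ∀ ω, F ω = walk Y n ω := fun ω => by simp [F, walk]
  have hF2 : MemLp F 2 μ := memLp_finsetSum' _ fun i _ => hY2 i
  have hEF : μ[F] = n * m := by
    simp only [F, Finset.sum_apply]
    rw [integral_finsetSum _ fun i _ => (hY2 i).integrable one_le_two]
    simp [hmean]
  have hVarF : variance F μ = n * v := by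
    rw [IndepFun.variance_sum (fun i _ => hY2 i) fun i _ j _ hij => hindep.indepFun hij]
    simp [hvar]
  have hc : 0 < n * -m / 2 :=
    div_pos (mul_pos (by exact_mod_cast hn) (neg_pos.2 hm)) two_pos
  have hsub : {ω | -a < walk Y n ω} ⊆ {ω | n * -m / 2 ≤ |F ω - μ[F]|} := fun ω hω => by
    have hω' : -a < walk Y n ω := hω
    show n * -m / 2 ≤ |F ω - μ[F]|
    rw [hEF, hF]
    exact le_abs.2 (Or.inl (by linarith))
  calc μ.real {ω | -a < walk Y n ω} ≤ variance F μ / (n * -m / 2) ^ 2 :=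
        (measureReal_mono hsub).trans <| ENNReal.toReal_le_of_le_ofReal
          (div_nonneg (variance_nonneg _ _) (sq_nonneg _)) (meas_ge_le_variance_div_sq hF2 hc)
    _ = 4 * v / (n * m ^ 2) := by
      have : (n : ℝ) ≠ 0 := by exact_mod_cast hn.ne'
      rw [hVarF]
      field_simp
      ring

lemma survival_le_div_sqrt_of_integral_neg [IsProbabilityMeasure μ]
    (hY : ∀ i, Measurable (Y i)) (hindep : iIndepFun Y μ)
    (hM : ∀ᵐ ω ∂μ, ∀ i, |Y i ω| ≤ M) {m : ℝ} (hmean : ∀ i, ∫ ω, Y i ω ∂μ = m)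
    (hm : m < 0) (hvar : ∀ i, variance (Y i) μ = v) (hv : 0 < v) (a : ℝ) :
    ∃ C > 0, ∃ K : ℕ, ∀ k ≥ K,
      μ.real {ω | ∀ n < k, -a < walk Y n ω} ≤ C / √k := by
  refine ⟨8 * v / m ^ 2, div_pos (by linarith) (sq_pos_of_neg hm), ⌈2 * a / -m⌉₊ + 2,
    fun k hk => ?_⟩
  have hk2 : (2 : ℝ) ≤ k := by exact_mod_cast (by omega : 2 ≤ k)
  have hn : ((k - 1 : ℕ) : ℝ) = k - 1 := by rw [Nat.cast_sub (by omega)]; simp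
  have hna : 2 * a ≤ (k - 1 : ℕ) * -m := by
    have h₁ : 2 * a / -m ≤ (k - 1 : ℕ) :=
      (Nat.le_ceil _).trans (by exact_mod_cast (by omega : ⌈2 * a / -m⌉₊ ≤ k - 1))
    rwa [div_le_iff₀ (by linarith)] at h₁
  have hsub : {ω | ∀ n < k, -a < walk Y n ω} ⊆ {ω | -a < walk Y (k - 1) ω} :=
    fun ω hω => hω (k - 1) (by omega)
  refine (measureReal_mono hsub).trans ((measureReal_lt_walk_le hindep
    (memLp_two_of_ae_abs_le hY hM) hmean hm hvar (by omega) hna).trans ?_)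
  have hsk : √(k : ℝ) ≤ 2 * (k - 1) := by
    rw [Real.sqrt_le_left (by linarith)]; nlinarith
  calc 4 * v / ((k - 1 : ℕ) * m ^ 2) = 8 * v / m ^ 2 / (2 * (k - 1)) := by
        rw [hn]; field_simp; ring
    _ ≤ 8 * v / m ^ 2 / √k :=
        div_le_div_of_nonneg_left (by positivity) (Real.sqrt_pos.2 (by linarith)) hsk

theorem survival_le_div_sqrt [IsProbabilityMeasure μ] (hY : ∀ i, Measurable (Y i))
    (hindep : iIndepFun Y μ) (hM : ∀ᵐ ω ∂μ, ∀ i, |Y i ω| ≤ M) {m : ℝ}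
    (hmean : ∀ i, ∫ ω, Y i ω ∂μ = m) (hm : m ≤ 0) (hvar : ∀ i, variance (Y i) μ = v)
    (hv : 0 < v) (a : ℝ) :
    ∃ C > 0, ∃ K : ℕ, ∀ k ≥ K,
      μ.real {ω | ∀ n < k, -a < walk Y n ω} ≤ C / √k := by
  rcases hm.lt_or_eq with hm | rfl
  · exact survival_le_div_sqrt_of_integral_neg hY hindep hM hmean hm hvar hv a
  · exact survival_le_div_sqrt_of_integral_eq_zero hY hindep hM hmean hvar hv a

lemma measure_eq_one_of_compl_subset_of_le_div_sqrt [IsProbabilityMeasure μ] {s : Set Ω}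
    {E : ℕ → Set Ω} (hsE : ∀ k, sᶜ ⊆ E k) {C : ℝ} {K : ℕ}
    (hE : ∀ k ≥ K, μ.real (E k) ≤ C / √k) : μ s = 1 := by
  have hlim : Filter.Tendsto (fun k : ℕ => C / √k) Filter.atTop (nhds 0) :=
    tendsto_const_nhds.div_atTop (Real.tendsto_sqrt_atTop.comp tendsto_natCast_atTop_atTop)
  have hcompl : μ.real sᶜ ≤ 0 := ge_of_tendsto hlim <| Filter.eventually_atTop.2
    ⟨K, fun k hk => (measureReal_mono (hsE k)).trans (hE k hk)⟩
  have hnull : μ sᶜ = 0 := (measureReal_eq_zero_iff).1 (hcompl.antisymm measureReal_nonneg)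
  refine le_antisymm prob_le_one ?_
  simpa [hnull] using measure_univ_le_add_compl s (μ := μ)

lemma eq_add_sum_of_forall_pos {x r : ℕ → ℤ}
    (hx : ∀ n, x (n + 1) = if 1 ≤ x n then x n + r (n + 1) else x n) {n : ℕ}
    (hpos : ∀ j < n, 0 < x j) : x n = x 0 + ∑ i ∈ range n, r (i + 1) := by
  induction n with
  | zero => simp
  | succ n ih =>
    rw [hx, if_pos (show 1 ≤ x n from hpos n n.lt_succ_self),
      ih fun j hj => hpos j (hj.trans n.lt_succ_self), sum_range_succ, add_assoc]

lemma survival_subset_walk {X R : ℕ → Ω → ℤ} {x₀ : ℤ} (hX0 : ∀ ω, X 0 ω = x₀)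
    (hXrec : ∀ n ω, X (n + 1) ω = if 1 ≤ X n ω then X n ω + R (n + 1) ω else X n ω) (k : ℕ) :
    {ω | ∀ n < k, 0 < X n ω} ⊆
      {ω | ∀ n < k, -(x₀ : ℝ) < walk (fun i ω => (R (i + 1) ω : ℝ)) n ω} := by
  intro ω hω n hn
  have hXn := eq_add_sum_of_forall_pos (x := fun n => X n ω) (r := fun i => R i ω)
    (fun n => hXrec n ω) fun j hj => hω j (hj.trans hn)
  have : 0 < x₀ + ∑ i ∈ range n, R (i + 1) ω := hX0 ω ▸ hXn ▸ hω n hn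
  simp only [walk]
  exact_mod_cast (by linarith : -x₀ < ∑ i ∈ range n, R (i + 1) ω)

end BoundedStepWalk

open BoundedStepWalk

/-- `T = min {n | X n ≤ 0}`, so `P(T < ∞) = μ {ω | ∃ n, X n ω ≤ 0}` and
`P(T ≥ k) = μ {ω | ∀ n < k, 0 < X n ω}`. -/
theorem bounded_increment_walk_termination
    {Ω : Type*} {m0 : MeasurableSpace Ω} (μ : Measure Ω) [IsProbabilityMeasure μ]
    (R : ℕ → Ω → ℤ) (hmeas : ∀ n, Measurable (R n))
    (hindep : iIndepFun R μ)
    (hident : ∀ n, IdentDistrib (R n) (R 0) μ μ)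
    (M : ℕ) (hbound : ∀ n, ∀ᵐ ω ∂μ, |R n ω| ≤ (M : ℤ))
    (hmean : ∫ ω, (R 0 ω : ℝ) ∂μ ≤ 0)
    (hvar : 0 < variance (fun ω => (R 0 ω : ℝ)) μ)
    (x₀ : ℤ)
    (X : ℕ → Ω → ℤ) (hX0 : ∀ ω, X 0 ω = x₀)
    (hXrec : ∀ n ω, X (n + 1) ω =
      if 1 ≤ X n ω then X n ω + R (n + 1) ω else X n ω) :
    μ {ω | ∃ n : ℕ, X n ω ≤ 0} = 1 ∧
      ∃ C > (0 : ℝ), ∃ K : ℕ, ∀ k : ℕ, K ≤ k →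
        (μ {ω | ∀ n < k, 0 < X n ω}).toReal ≤ C / Real.sqrt k := by
  set Y : ℕ → Ω → ℝ := fun i ω => R (i + 1) ω
  have hY : ∀ i, Measurable (Y i) := fun i => measurable_from_top.comp (hmeas (i + 1))
  have hYindep : iIndepFun Y μ :=
    (hindep.precomp Nat.succ_injective).comp _ fun _ => measurable_from_top
  have hYident : ∀ i, IdentDistrib (Y i) (fun ω => (R 0 ω : ℝ)) μ μ :=
    fun i => (hident (i + 1)).comp measurable_from_top
  have hYbound : ∀ᵐ ω ∂μ, ∀ i, |Y i ω| ≤ M :=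
    ae_all_iff.2 fun i => (hbound (i + 1)).mono fun ω h => by simp only [Y]; exact_mod_cast h
  obtain ⟨C, hC, K, htail⟩ := survival_le_div_sqrt hY hYindep hYbound
    (fun i => (hYident i).integral_eq) hmean (fun i => (hYident i).variance_eq) hvar x₀
  have hsurvK : ∀ k ≥ K, μ.real {ω | ∀ n < k, 0 < X n ω} ≤ C / √k :=
    fun k hk => (measureReal_mono (survival_subset_walk hX0 hXrec k)).trans (htail k hk)
  refine ⟨measure_eq_one_of_compl_subset_of_le_div_sqrt
    (E := fun k => {ω | ∀ n < k, 0 < X n ω}) (fun k ω hω n _ => ?_) hsurvK,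
    C, hC, K, hsurvK⟩
  exact lt_of_not_ge fun h => hω ⟨n, h⟩
end

section
/- Fix p ∈ (0,1) and let {R_n}_{n∈ℕ} be i.i.d. integer-valued random variables with the two-sided geometric distribution: P(R_n = k) = (1−p)^{k−1}·p/2 for integers k > 0 and P(R_n = k) = (1−p)^{−k−1}·p/2 for integers k < 0 (and P(R_n = 0) = 0). Fix an integer x₀ and define X_0 = x₀ and X_{n+1} = X_n + R_{n+1} if X_n ≥ 1, and X_{n+1} = X_n otherwise. Then P(∃ n such that X_n ≤ 0) = 1; that is, the loop 'while x ≥ 1 do x := x + r od' with two-sided geometric sampling terminates almost surely from every initial value. -/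
/-!
As long as the walk stays positive it equals `x₀ + S n` with `S n = R 1 + ⋯ + R n`, so it
suffices that `S` is almost surely unbounded below. That is a tail event of the independent
steps, hence has probability `0` or `1`, and by symmetry of the step law it is as likely as `S`
being unbounded above. Since arbitrarily large jumps have positive probability, the second
Borel–Cantelli lemma makes them occur almost surely, which no sequence bounded on both sides
allows; so the two events cannot both be null.
-/

open MeasureTheory ProbabilityTheory Filter Finset
open scoped ENNReal

section PartialSums

variable {G : Type*} [AddCommGroup G] [LinearOrder G] [IsOrderedAddMonoid G]

lemma forall_frequently_const_add_le_iff {α : Type*} {l : Filter α} (s : α → G) (c : G) :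
    (∀ M, ∃ᶠ n in l, c + s n ≤ M) ↔ ∀ M, ∃ᶠ n in l, s n ≤ M :=
  ⟨fun h M => by simpa using h (c + M), fun h M => by simpa [le_sub_iff_add_le'] using h (M - c)⟩

lemma forall_frequently_sum_range_le_iff_shift (s : ℕ → G) (k : ℕ) :
    (∀ M, ∃ᶠ n in atTop, ∑ i ∈ range n, s i ≤ M) ↔
      ∀ M, ∃ᶠ n in atTop, ∑ i ∈ range n, s (k + i) ≤ M := by
  have hshift (M : G) : (∃ᶠ n in atTop, ∑ i ∈ range n, s i ≤ M) ↔
      ∃ᶠ n in atTop, ∑ i ∈ range k, s i + ∑ i ∈ range n, s (k + i) ≤ M := by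
    conv_lhs => rw [← map_add_atTop_eq_nat k, frequently_map]
    simp only [add_comm _ k, sum_range_add]
  simp only [hshift, forall_frequently_const_add_le_iff]

lemma forall_frequently_sum_range_le_or_ge_of_frequently_lt {s : ℕ → G}
    (hs : ∀ M, ∃ᶠ i in atTop, M < s i) :
    (∀ M, ∃ᶠ n in atTop, ∑ i ∈ range n, s i ≤ M) ∨
      ∀ M, ∃ᶠ n in atTop, M ≤ ∑ i ∈ range n, s i := by
  by_contra! h
  obtain ⟨⟨lo, hlo⟩, ⟨hi, hhi⟩⟩ := h
  have hbdd : ∀ᶠ n in atTop, lo < ∑ i ∈ range n, s i ∧ ∑ i ∈ range (n + 1), s i < hi :=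
    hlo.and ((tendsto_add_atTop_nat 1).eventually hhi)
  obtain ⟨n, hjump, hlo_n, hhi_n⟩ := ((hs (hi - lo)).and_eventually hbdd).exists
  rw [sum_range_succ] at hhi_n
  have := add_lt_add hlo_n hjump
  rw [add_sub_cancel] at this
  exact lt_asymm this hhi_n

end PartialSums

lemma measurableSet_setOf_forall_frequently_le {α : Type*} [MeasurableSpace α]
    {g : ℕ → α → ℤ} (hg : ∀ n, Measurable (g n)) :
    MeasurableSet {x | ∀ M : ℤ, ∃ᶠ n in atTop, g n x ≤ M} := by
  have hlimsup : {x | ∀ M : ℤ, ∃ᶠ n in atTop, g n x ≤ M} =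
      ⋂ M : ℤ, limsup (fun n => {x | g n x ≤ M}) atTop := by
    ext x
    simp [mem_limsup_iff_frequently_mem]
  rw [hlimsup]
  exact .iInter fun M => .measurableSet_limsup fun n => hg n measurableSet_Iic

section RandomWalk

variable {Ω : Type*} {m0 : MeasurableSpace Ω} {μ : Measure Ω} {f : ℕ → Ω → ℤ}

lemma measurableSet_limsup_comap_setOf_forall_frequently_sum_range_le (f : ℕ → Ω → ℤ) :
    MeasurableSet[limsup (fun i => MeasurableSpace.comap (f i) inferInstance) atTop]
      {ω | ∀ M : ℤ, ∃ᶠ n in atTop, ∑ i ∈ range n, f i ω ≤ M} := by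
  rw [limsup_eq_iInf_iSup_of_nat, MeasurableSpace.measurableSet_iInf]
  intro k
  let mk : MeasurableSpace Ω := ⨆ i ≥ k, MeasurableSpace.comap (f i) inferInstance
  have hsum (n : ℕ) : Measurable[mk] fun ω => ∑ i ∈ range n, f (k + i) ω :=
    Finset.measurable_sum _ fun i _ => (comap_measurable (f (k + i))).mono
      (le_iSup₂ (f := fun i (_ : i ≥ k) => MeasurableSpace.comap (f i) inferInstance)
        (k + i) (Nat.le_add_right k i)) le_rfl
  have hshift : {ω | ∀ M : ℤ, ∃ᶠ n in atTop, ∑ i ∈ range n, f i ω ≤ M} =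
      {ω | ∀ M : ℤ, ∃ᶠ n in atTop, ∑ i ∈ range n, f (k + i) ω ≤ M} :=
    Set.ext fun ω => forall_frequently_sum_range_le_iff_shift (f · ω) k
  rw [hshift]
  exact @measurableSet_setOf_forall_frequently_le Ω mk _ hsum

lemma measure_setOf_forall_frequently_sum_range_le_eq_zero_or_one
    (hf : ∀ i, Measurable (f i)) (hindep : iIndepFun f μ) :
    μ {ω | ∀ M : ℤ, ∃ᶠ n in atTop, ∑ i ∈ range n, f i ω ≤ M} = 0 ∨
      μ {ω | ∀ M : ℤ, ∃ᶠ n in atTop, ∑ i ∈ range n, f i ω ≤ M} = 1 :=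
  measure_zero_or_one_of_measurableSet_limsup_atTop (fun i => (hf i).comap_le) hindep.iIndep
    (measurableSet_limsup_comap_setOf_forall_frequently_sum_range_le f)

lemma measure_setOf_forall_frequently_sum_range_le_eq_ge (hf : ∀ i, Measurable (f i))
    (hindep : iIndepFun f μ) (hsymm : ∀ i, μ.map (fun ω => -f i ω) = μ.map (f i)) :
    μ {ω | ∀ M : ℤ, ∃ᶠ n in atTop, ∑ i ∈ range n, f i ω ≤ M} =
      μ {ω | ∀ M : ℤ, ∃ᶠ n in atTop, M ≤ ∑ i ∈ range n, f i ω} := by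
  have hneg : ∀ i, Measurable (fun ω => -f i ω) := fun i => (hf i).neg
  have hlaw : μ.map (fun ω i => -f i ω) = μ.map (fun ω i => f i ω) := by
    rw [(hindep.comp (fun _ => Neg.neg) fun _ => measurable_neg).map_fun_eq_infinitePi_map hneg,
      hindep.map_fun_eq_infinitePi_map hf]
    simp_rw [hsymm]
  set E : Set (ℕ → ℤ) := {x | ∀ M : ℤ, ∃ᶠ n in atTop, ∑ i ∈ range n, x i ≤ M}
  have hE : MeasurableSet E := measurableSet_setOf_forall_frequently_le fun n =>
    Finset.measurable_sum _ fun i _ => measurable_pi_apply i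
  have hupper : {ω | ∀ M : ℤ, ∃ᶠ n in atTop, M ≤ ∑ i ∈ range n, f i ω} =
      (fun ω i => -f i ω) ⁻¹' E := by
    ext ω
    simp only [E, Set.mem_preimage, Set.mem_ofPred_eq, sum_neg_distrib, neg_le]
    exact ⟨fun h M => h (-M), fun h M => by simpa using h (-M)⟩
  rw [hupper, ← Measure.map_apply (measurable_pi_lambda _ hneg) hE, hlaw,
    Measure.map_apply (measurable_pi_lambda _ hf) hE]
  rfl

lemma ae_forall_frequently_lt [IsProbabilityMeasure μ] (hf : ∀ i, Measurable (f i))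
    (hindep : iIndepFun f μ)
    (hjump : ∀ M : ℤ, ∑' i, μ {ω | M < f i ω} = ∞) :
    ∀ᵐ ω ∂μ, ∀ M : ℤ, ∃ᶠ i in atTop, M < f i ω := by
  rw [ae_all_iff]
  intro M
  have hset (i : ℕ) : MeasurableSet {ω | M < f i ω} := measurableSet_lt measurable_const (hf i)
  have hlimsup : μ (limsup (fun i => {ω | M < f i ω}) atTop) = 1 :=
    measure_limsup_eq_one hset
      (iIndep_comap_mem_iff.1 (hindep.comp (fun _ x => M < x) fun _ => measurable_from_top))
      (hjump M)
  have hae : limsup (fun i => {ω | M < f i ω}) atTop ∈ ae μ :=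
    mem_ae_iff.2 ((prob_compl_eq_zero_iff (.measurableSet_limsup hset)).2 hlimsup)
  filter_upwards [hae] with ω hω using mem_limsup_iff_frequently_mem.1 hω

lemma measure_setOf_forall_frequently_sum_range_le_eq_one [IsProbabilityMeasure μ]
    (hf : ∀ i, Measurable (f i)) (hindep : iIndepFun f μ)
    (hsymm : ∀ i, μ.map (fun ω => -f i ω) = μ.map (f i))
    (hjump : ∀ M : ℤ, ∑' i, μ {ω | M < f i ω} = ∞) :
    μ {ω | ∀ M : ℤ, ∃ᶠ n in atTop, ∑ i ∈ range n, f i ω ≤ M} = 1 := by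
  set A := {ω | ∀ M : ℤ, ∃ᶠ n in atTop, ∑ i ∈ range n, f i ω ≤ M}
  set B := {ω | ∀ M : ℤ, ∃ᶠ n in atTop, M ≤ ∑ i ∈ range n, f i ω}
  refine (measure_setOf_forall_frequently_sum_range_le_eq_zero_or_one hf hindep).resolve_left
    fun hA => ?_
  have hAB : A ∪ B ∈ ae μ := by
    filter_upwards [ae_forall_frequently_lt hf hindep hjump] with ω hω
    exact forall_frequently_sum_range_le_or_ge_of_frequently_lt hω
  have hB : μ B = 0 :=
    (measure_setOf_forall_frequently_sum_range_le_eq_ge hf hindep hsymm).symm.trans hA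
  have := measure_union_le (μ := μ) A B
  rw [measure_congr (eventuallyEq_univ.2 hAB), measure_univ, hA, hB, add_zero] at this
  exact one_ne_zero (le_zero_iff.1 this)

end RandomWalk

def HasTwoSidedGeometricLaw {Ω : Type*} {m0 : MeasurableSpace Ω} (μ : Measure Ω) (p : ℝ)
    (Z : Ω → ℤ) : Prop :=
  ∀ k : ℤ, μ {ω | Z ω = k} =
    ENNReal.ofReal (if k = 0 then 0 else (1 - p) ^ (k.natAbs - 1) * p / 2)

namespace HasTwoSidedGeometricLaw

variable {Ω : Type*} {m0 : MeasurableSpace Ω} {μ : Measure Ω} {p : ℝ}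

lemma map_neg {Z : Ω → ℤ} (h : HasTwoSidedGeometricLaw μ p Z) (hZ : Measurable Z) :
    μ.map (fun ω => -Z ω) = μ.map Z := by
  refine Measure.ext_of_singleton fun k => ?_
  rw [Measure.map_apply (f := fun ω => -Z ω) hZ.neg (measurableSet_singleton k),
    Measure.map_apply hZ (measurableSet_singleton k)]
  have hneg : (fun ω => -Z ω) ⁻¹' {k} = {ω | Z ω = -k} := by
    ext ω
    simp [neg_eq_iff_eq_neg]
  rw [hneg, h]
  simp only [Int.natAbs_neg, neg_eq_zero]
  exact (h k).symm

lemma tsum_measure_lt_eq_top {f : ℕ → Ω → ℤ} (hp : p ∈ Set.Ioo 0 1)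
    (h : ∀ i, HasTwoSidedGeometricLaw μ p (f i)) (M : ℤ) :
    ∑' i, μ {ω | M < f i ω} = ∞ := by
  set v : ℤ := |M| + 1
  have hv : M < v := (le_abs_self M).trans_lt (lt_add_one _)
  have hc : ENNReal.ofReal ((1 - p) ^ (v.natAbs - 1) * p / 2) ≠ 0 :=
    ENNReal.ofReal_pos.2 (div_pos (mul_pos (pow_pos (sub_pos.2 hp.2) _) hp.1) two_pos) |>.ne'
  refine top_unique ((ENNReal.tsum_const_eq_top_of_ne_zero hc).ge.trans
    (ENNReal.tsum_le_tsum fun i => ?_))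
  have hatom : μ {ω | f i ω = v} = ENNReal.ofReal ((1 - p) ^ (v.natAbs - 1) * p / 2) := by
    rw [h i, if_neg (by positivity)]
  exact hatom ▸ measure_mono fun ω (hω : f i ω = v) => show M < f i ω from hω ▸ hv

end HasTwoSidedGeometricLaw

lemma exists_le_zero_of_forall_frequently_sum_range_le {x r : ℕ → ℤ}
    (hstep : ∀ n, x (n + 1) = if 1 ≤ x n then x n + r n else x n)
    (hr : ∀ M, ∃ᶠ n in atTop, ∑ i ∈ range n, r i ≤ M) :
    ∃ n, x n ≤ 0 := by
  by_contra! hpos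
  have hx (n : ℕ) : x n = x 0 + ∑ i ∈ range n, r i := by
    induction n with
    | zero => simp
    | succ n ih =>
      rw [hstep, if_pos (Order.one_le_iff_pos.2 (hpos n)), ih, sum_range_succ, add_assoc]
  obtain ⟨n, hn⟩ := (hr (-x 0)).exists
  linarith [hpos n, hx n]

/-- **Almost-sure termination of `while x ≥ 1 do x := x + r od` with two-sided
geometric sampling:** `P(r = k) = (1−p)^{|k|−1}·p/2` for `k ≠ 0`, `P(r = 0) = 0`.
The loop terminates a.s. from every initial value `x₀ ∈ ℤ`. -/
theorem two_sided_geometric_walk_termination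
    {Ω : Type*} {m0 : MeasurableSpace Ω} (μ : Measure Ω) [IsProbabilityMeasure μ]
    (p : ℝ) (hp : p ∈ Set.Ioo (0 : ℝ) 1)
    (R : ℕ → Ω → ℤ) (hmeas : ∀ n, Measurable (R n))
    (hindep : iIndepFun R μ)
    (hdist : ∀ n : ℕ, ∀ k : ℤ,
      μ {ω | R n ω = k} =
        ENNReal.ofReal (if k = 0 then 0 else (1 - p) ^ (k.natAbs - 1) * p / 2)) :
    ∀ (x₀ : ℤ) (X : ℕ → Ω → ℤ), (∀ ω, X 0 ω = x₀) →
      (∀ n ω, X (n + 1) ω =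
        if 1 ≤ X n ω then X n ω + R (n + 1) ω else X n ω) →
      μ {ω | ∃ n : ℕ, X n ω ≤ 0} = 1 := by
  intro x₀ X _ hXstep
  have hlaw (i : ℕ) : HasTwoSidedGeometricLaw μ p (R (i + 1)) := hdist (i + 1)
  have hunbdd : μ {ω | ∀ M : ℤ, ∃ᶠ n in atTop, ∑ i ∈ range n, R (i + 1) ω ≤ M} = 1 :=
    measure_setOf_forall_frequently_sum_range_le_eq_one (fun i => hmeas (i + 1))
      (hindep.precomp (add_left_injective 1)) (fun i => (hlaw i).map_neg (hmeas (i + 1)))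
      (HasTwoSidedGeometricLaw.tsum_measure_lt_eq_top hp hlaw)
  refine le_antisymm prob_le_one (hunbdd ▸ measure_mono fun ω hω => ?_)
  exact exists_le_zero_of_forall_frequently_sum_range_le (fun n => hXstep n ω) hω
end

section
/- Let {(R_n, S_n)}_{n∈ℕ} be i.i.d. pairs of integer-valued random variables with R_n and S_n independent, μ₁ := E(R_1) > 0, μ₂ := E(S_1) > 0, 0 < Var(R_1) < ∞ and 0 < Var(S_1) < ∞. Fix integers x₀, y₀ and define X_n := x₀ + Σ_{k=1}^n R_k and Y_n := y₀ + Σ_{k=1}^n S_k, stopped at the first time Y_n ≤ X_n² (i.e., the increments are applied only while Y_n > X_n²). Then P(∃ n such that Y_n ≤ X_n²) = 1; that is, the loop 'while y > x² do x := x + r₁; y := y + r₂ od' terminates almost surely from every initial valuation. -/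
/-!
By the strong law of large numbers `X_n / n → E R₁ > 0` and `Y_n / n → E S₁` almost surely.
Hence `X_n² / n ~ (E R₁)² n → ∞` outgrows `Y_n / n`, so on almost every path `Y_n ≤ X_n²`
for all large `n`.
-/

open MeasureTheory ProbabilityTheory Filter Topology Function

lemma tendsto_const_add_div_natCast {a : ℕ → ℝ} {l : ℝ} (c : ℝ)
    (h : Tendsto (fun n : ℕ => a n / n) atTop (𝓝 l)) :
    Tendsto (fun n : ℕ => (c + a n) / n) atTop (𝓝 l) := by
  have hc : Tendsto (fun n : ℕ => c / n) atTop (𝓝 0) :=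
    tendsto_const_nhds.div_atTop tendsto_natCast_atTop_atTop
  simpa only [add_div, zero_add] using hc.add h

lemma eventually_le_sq_of_tendsto_div {a b : ℕ → ℝ} {α β : ℝ} (hα : α ≠ 0)
    (ha : Tendsto (fun n : ℕ => a n / n) atTop (𝓝 α))
    (hb : Tendsto (fun n : ℕ => b n / n) atTop (𝓝 β)) :
    ∀ᶠ n in atTop, b n ≤ a n ^ 2 := by
  have hsq : Tendsto (fun n : ℕ => (a n / n) ^ 2 * n) atTop atTop :=
    (ha.pow 2).pos_mul_atTop (by positivity) tendsto_natCast_atTop_atTop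
  have hgap : Tendsto (fun n : ℕ => (a n / n) ^ 2 * n + -(b n / n)) atTop atTop :=
    hsq.atTop_add hb.neg
  filter_upwards [hgap.eventually_gt_atTop 0, eventually_gt_atTop 0] with n hn hpos
  have hn' : 0 < (n : ℝ) := Nat.cast_pos.2 hpos
  have hexpand : (a n / n) ^ 2 * n + -(b n / n) = (a n ^ 2 - b n) / n := by
    field_simp
    ring
  rw [hexpand] at hn
  linarith [(div_pos_iff_of_pos_right hn').1 hn]

lemma strong_law_ae_comp {Ω β : Type*} {_ : MeasurableSpace Ω} {_ : MeasurableSpace β}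
    {μ : Measure Ω} (Z : ℕ → Ω → β) (hindep : Pairwise ((· ⟂ᵢ[μ] ·) on Z))
    (hident : ∀ i, IdentDistrib (Z i) (Z 0) μ μ) {f : β → ℝ} (hf : Measurable f)
    (hint : Integrable (f ∘ Z 0) μ) :
    ∀ᵐ ω ∂μ, Tendsto (fun n : ℕ => (∑ i ∈ Finset.range n, f (Z i ω)) / n) atTop
      (𝓝 (∫ ω, f (Z 0 ω) ∂μ)) :=
  strong_law_ae_real (fun i => f ∘ Z i) hint (fun _ _ hij => (hindep hij).comp hf hf)
    (fun i => (hident i).comp hf)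

lemma measure_eq_one_of_ae {Ω : Type*} {_ : MeasurableSpace Ω} {μ : Measure Ω}
    [IsProbabilityMeasure μ] {s : Set Ω} (h : ∀ᵐ ω ∂μ, ω ∈ s) : μ s = 1 :=
  (measure_congr (ae_eq_univ.2 (mem_ae_iff.1 h))).trans measure_univ

theorem parabola_walk_termination_general
    {Ω : Type*} {m0 : MeasurableSpace Ω} (μ : Measure Ω) [IsProbabilityMeasure μ]
    (R S : ℕ → Ω → ℤ)
    (hpairindep : iIndepFun (fun n ω => (R n ω, S n ω)) μ)
    (hident : ∀ n, IdentDistrib (fun ω => (R n ω, S n ω)) (fun ω => (R 0 ω, S 0 ω)) μ μ)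
    (hμ₁ : 0 < ∫ ω, (R 0 ω : ℝ) ∂μ)
    (hR2 : MemLp (fun ω => (R 0 ω : ℝ)) 2 μ)
    (hS2 : MemLp (fun ω => (S 0 ω : ℝ)) 2 μ) :
    ∀ x₀ y₀ : ℤ,
      μ {ω | ∃ n : ℕ,
        y₀ + ∑ k ∈ Finset.range n, S k ω ≤
          (x₀ + ∑ k ∈ Finset.range n, R k ω) ^ 2} = 1 := by
  intro x₀ y₀
  have hpair : Pairwise ((· ⟂ᵢ[μ] ·) on fun n ω => (R n ω, S n ω)) :=
    fun _ _ => hpairindep.indepFun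
  have hlawR := strong_law_ae_comp _ hpair hident (f := fun p : ℤ × ℤ => (p.1 : ℝ))
    (by fun_prop) (hR2.integrable one_le_two)
  have hlawS := strong_law_ae_comp _ hpair hident (f := fun p : ℤ × ℤ => (p.2 : ℝ))
    (by fun_prop) (hS2.integrable one_le_two)
  refine measure_eq_one_of_ae ?_
  filter_upwards [hlawR, hlawS] with ω hX hY
  obtain ⟨n, hn⟩ := (eventually_le_sq_of_tendsto_div hμ₁.ne'
    (tendsto_const_add_div_natCast x₀ hX) (tendsto_const_add_div_natCast y₀ hY)).exists
  exact ⟨n, by exact_mod_cast hn⟩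

/-- **Almost-sure termination of `while y > x² do x := x + r₁; y := y + r₂ od`.**
The pairs `(R_n, S_n)` are i.i.d., with `R_n` independent of `S_n`, positive means
and finite positive variances. The two-dimensional walk
`(X_n, Y_n) = (x₀ + Σ_{k<n} R_k, y₀ + Σ_{k<n} S_k)` leaves the region above the
parabola `y = x²` almost surely; since the loop stops at the first such time, this
is exactly almost-sure termination from every initial valuation. -/
theorem parabola_walk_termination
    {Ω : Type*} {m0 : MeasurableSpace Ω} (μ : Measure Ω) [IsProbabilityMeasure μ]
    (R S : ℕ → Ω → ℤ) (hRmeas : ∀ n, Measurable (R n)) (hSmeas : ∀ n, Measurable (S n))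
    (hpairindep : iIndepFun (fun n ω => (R n ω, S n ω)) μ)
    (hident : ∀ n, IdentDistrib (fun ω => (R n ω, S n ω)) (fun ω => (R 0 ω, S 0 ω)) μ μ)
    (hRS : ∀ n, IndepFun (R n) (S n) μ)
    (hμ₁ : 0 < ∫ ω, (R 0 ω : ℝ) ∂μ) (hμ₂ : 0 < ∫ ω, (S 0 ω : ℝ) ∂μ)
    (hR2 : MemLp (fun ω => (R 0 ω : ℝ)) 2 μ)
    (hS2 : MemLp (fun ω => (S 0 ω : ℝ)) 2 μ)
    (hvarR : 0 < variance (fun ω => (R 0 ω : ℝ)) μ)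
    (hvarS : 0 < variance (fun ω => (S 0 ω : ℝ)) μ) :
    ∀ x₀ y₀ : ℤ,
      μ {ω | ∃ n : ℕ,
        y₀ + ∑ k ∈ Finset.range n, S k ω ≤
          (x₀ + ∑ k ∈ Finset.range n, R k ω) ^ 2} = 1 :=
  parabola_walk_termination_general (m0 := m0) μ R S hpairindep hident hμ₁ hR2 hS2
end
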